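/- arXiv:2604.20208 — 2 statements merged into one kernel-verified Lean document; each statement's English description precedes it below -/
import Mathlib

section
/- Let V : ℕ → (X → ℝ) be defined by the backward recursion V 0 x = indicator of U₀ x, and for k ≥ 1, V k x = 1 if x ∈ U_k and V k x = E[V (k-1) x' | x] (expectation over the transition kernel) if x ∉ U_k. Suppose B : X → ℕ → ℝ and constants β_i ≥ 0 satisfy: (i) B x i ≥ 0 for all x, i; (ii) B x i ≥ 1 for all x ∈ U_i and all i; (iii) E[B x' (i-1) | x] ≤ B x i + β_i for all x ∉ U_i and i ≥ 1. Then for all k and all x, V k x ≤ B x k + ∑_{i=1}^{k} β_i. -/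
open MeasureTheory
open scoped Classical

/-! Induction on `k`. On `U (k+1)` the value is `1 ≤ B x (k+1)`; off it, integrate the
induction hypothesis against `T x` and apply the drift condition. Nonnegativity of the
value function lets `integral_mono_of_nonneg` compare the integrals without knowing that
`V k` is integrable. -/

theorem integral_le_integral_add_const_of_ae_le {α : Type*} [MeasurableSpace α]
    {μ : Measure α} [IsProbabilityMeasure μ] {f g : α → ℝ} {c : ℝ}
    (hf : 0 ≤ᵐ[μ] f) (hg : Integrable g μ) (hfg : ∀ᵐ x ∂μ, f x ≤ g x + c) :
    ∫ x, f x ∂μ ≤ ∫ x, g x ∂μ + c := by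
  calc ∫ x, f x ∂μ ≤ ∫ x, g x + c ∂μ :=
        integral_mono_of_nonneg hf (hg.add (integrable_const c)) hfg
    _ = ∫ x, g x ∂μ + c := by
        rw [integral_add hg (integrable_const c), integral_const, probReal_univ, one_smul]

theorem hittingValue_nonneg {X : Type*} [MeasurableSpace X] {T : X → Measure X}
    {U : ℕ → Set X} {V : ℕ → X → ℝ}
    (hV0 : ∀ x, V 0 x = if x ∈ U 0 then 1 else 0)
    (hVu : ∀ k, 1 ≤ k → ∀ x ∈ U k, V k x = 1)
    (hVs : ∀ k, 1 ≤ k → ∀ x, x ∉ U k → V k x = ∫ y, V (k - 1) y ∂(T x)) :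
    ∀ k x, 0 ≤ V k x := by
  intro k
  induction k with
  | zero => intro x; rw [hV0]; split_ifs <;> norm_num
  | succ k ih =>
    intro x
    by_cases hx : x ∈ U (k + 1)
    · rw [hVu (k + 1) k.succ_pos x hx]; exact zero_le_one
    · rw [hVs (k + 1) k.succ_pos x hx]; exact integral_nonneg ih

theorem timeVarying_barrier_induction_general
    {X : Type*} [MeasurableSpace X]
    (T : X → Measure X) (hT : ∀ x, IsProbabilityMeasure (T x))
    (U : ℕ → Set X)
    (V : ℕ → X → ℝ)
    (hV0 : ∀ x, V 0 x = if x ∈ U 0 then 1 else 0)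
    (hVu : ∀ k, 1 ≤ k → ∀ x ∈ U k, V k x = 1)
    (hVs : ∀ k, 1 ≤ k → ∀ x, x ∉ U k → V k x = ∫ y, V (k - 1) y ∂(T x))
    (B : X → ℕ → ℝ) (β : ℕ → ℝ)
    (hβ : ∀ i, 0 ≤ β i)
    (hBint : ∀ x i, Integrable (fun y => B y i) (T x))
    (hBnonneg : ∀ x i, 0 ≤ B x i)
    (hBunsafe : ∀ i, ∀ x ∈ U i, 1 ≤ B x i)
    (hdrift : ∀ i, 1 ≤ i → ∀ x, x ∉ U i →
      (∫ y, B y (i - 1) ∂(T x)) ≤ B x i + β i) :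
    ∀ k x, V k x ≤ B x k + ∑ i ∈ Finset.Icc 1 k, β i := by
  have hVnonneg := hittingValue_nonneg hV0 hVu hVs
  intro k
  induction k with
  | zero =>
    intro x
    rw [hV0, Finset.Icc_eq_empty_of_lt zero_lt_one, Finset.sum_empty, add_zero]
    split_ifs with hx
    exacts [hBunsafe 0 x hx, hBnonneg x 0]
  | succ k ih =>
    intro x
    rw [Finset.sum_Icc_succ_top (Nat.le_add_left 1 k)]
    by_cases hx : x ∈ U (k + 1)
    · rw [hVu (k + 1) k.succ_pos x hx]
      have hsum : 0 ≤ ∑ i ∈ Finset.Icc 1 k, β i := Finset.sum_nonneg fun i _ => hβ i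
      linarith [hBunsafe (k + 1) x hx, hβ (k + 1)]
    · have hstep : ∫ y, V k y ∂(T x) ≤ ∫ y, B y k ∂(T x) + ∑ i ∈ Finset.Icc 1 k, β i :=
        have := hT x
        integral_le_integral_add_const_of_ae_le (.of_forall (hVnonneg k)) (hBint x k)
          (.of_forall ih)
      have hdrift_x := hdrift (k + 1) k.succ_pos x hx
      rw [Nat.add_sub_cancel] at hdrift_x
      rw [hVs (k + 1) k.succ_pos x hx, Nat.add_sub_cancel]
      linarith

/-- Induction core of the time-varying barrier bound (proof of Theorem 3):
the backward DP value function `V` (probability of hitting the time-indexed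
unsafe sets within `k` steps) is bounded by the certificate plus accumulated
drift constants. -/
theorem timeVarying_barrier_induction
    {X : Type*} [MeasurableSpace X]
    (T : X → Measure X) (hT : ∀ x, IsProbabilityMeasure (T x))
    (U : ℕ → Set X) (hU : ∀ k, MeasurableSet (U k))
    (V : ℕ → X → ℝ)
    (hV0 : ∀ x, V 0 x = if x ∈ U 0 then 1 else 0)
    (hVu : ∀ k, 1 ≤ k → ∀ x ∈ U k, V k x = 1)
    (hVs : ∀ k, 1 ≤ k → ∀ x, x ∉ U k → V k x = ∫ y, V (k - 1) y ∂(T x))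
    (B : X → ℕ → ℝ) (β : ℕ → ℝ)
    (hβ : ∀ i, 0 ≤ β i)
    (hBmeas : ∀ i, Measurable fun x => B x i)
    (hBint : ∀ x i, Integrable (fun y => B y i) (T x))
    (hBnonneg : ∀ x i, 0 ≤ B x i)
    (hBunsafe : ∀ i, ∀ x ∈ U i, 1 ≤ B x i)
    (hdrift : ∀ i, 1 ≤ i → ∀ x, x ∉ U i →
      (∫ y, B y (i - 1) ∂(T x)) ≤ B x i + β i) :
    ∀ k x, V k x ≤ B x k + ∑ i ∈ Finset.Icc 1 k, β i :=
  timeVarying_barrier_induction_general T hT U V hV0 hVu hVs B β hβ hBint hBnonneg hBunsafe hdrift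
end

section
/- Define W_k(x) recursively by W_0(x) = 1 if x ∉ S and 0 otherwise, and W_k(x) = 1 if x ∉ S, W_k(x) = ∫ W_{k-1} dT(x) if x ∈ S. If B : X → ℝ satisfies B ≥ 0 everywhere, B ≥ 1 on the complement of S, and ∫ B dT(x) ≤ B(x) + β for all x ∈ S with β ≥ 0, then W_k(x) ≤ B(x) + k·β for all k ∈ ℕ and all x ∈ X. -/
open MeasureTheory
open scoped Classical

theorem integral_le_integral_add_const_of_le {Ω : Type*} [MeasurableSpace Ω] {μ : Measure Ω}
    [IsProbabilityMeasure μ] {f g : Ω → ℝ} {c : ℝ} (hg : Integrable g μ) (hg_nonneg : 0 ≤ g)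
    (hc : 0 ≤ c) (hfg : ∀ ω, f ω ≤ g ω + c) :
    ∫ ω, f ω ∂μ ≤ ∫ ω, g ω ∂μ + c := by
  by_cases hf : Integrable f μ
  · calc ∫ ω, f ω ∂μ ≤ ∫ ω, (g ω + c) ∂μ := integral_mono hf (hg.add (integrable_const c)) hfg
      _ = ∫ ω, g ω ∂μ + c := by simp [integral_add hg (integrable_const c)]
  · -- the junk value `0` of a non-integrable `f` is why `g` and `c` must be nonnegative
    rw [integral_undef hf]
    linarith [integral_nonneg (μ := μ) hg_nonneg]

theorem timeInvariant_barrier_induction_general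
    {X : Type*} [MeasurableSpace X]
    (T : X → Measure X) (hT : ∀ x, IsProbabilityMeasure (T x))
    (S : Set X)
    (W : ℕ → X → ℝ)
    (hW0 : ∀ x, W 0 x = if x ∈ S then 0 else 1)
    (hWin : ∀ k, ∀ x ∈ S, W (k + 1) x = ∫ y, W k y ∂(T x))
    (hWout : ∀ k, ∀ x, x ∉ S → W (k + 1) x = 1)
    (B : X → ℝ) (β : ℝ) (hβ : 0 ≤ β)
    (hBint : ∀ x, Integrable B (T x))
    (hBnonneg : ∀ x, 0 ≤ B x)
    (hBunsafe : ∀ x, x ∉ S → 1 ≤ B x)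
    (hdrift : ∀ x ∈ S, (∫ y, B y ∂(T x)) ≤ B x + β) :
    ∀ (k : ℕ) (x : X), W k x ≤ B x + k * β := by
  intro k
  induction k with
  | zero =>
    intro x
    rw [hW0]
    split_ifs with hx
    · simpa using hBnonneg x
    · simpa using hBunsafe x hx
  | succ k ih =>
    intro x
    by_cases hx : x ∈ S
    · have := hT x
      have hkβ : 0 ≤ (k : ℝ) * β := by positivity
      calc W (k + 1) x = ∫ y, W k y ∂(T x) := hWin k x hx
        _ ≤ ∫ y, B y ∂(T x) + k * β :=
          integral_le_integral_add_const_of_le (hBint x) hBnonneg hkβ ih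
        _ ≤ B x + β + k * β := by linarith [hdrift x hx]
        _ = B x + ↑(k + 1) * β := by push_cast; ring
    · have hkβ : 0 ≤ ((k + 1 : ℕ) : ℝ) * β := by positivity
      rw [hWout k x hx]
      linarith [hBunsafe x hx]

/-- Induction core of the time-invariant barrier bound: the exit-probability
value function `W` is bounded by `B(x) + k·β`. -/
theorem timeInvariant_barrier_induction
    {X : Type*} [MeasurableSpace X]
    (T : X → Measure X) (hT : ∀ x, IsProbabilityMeasure (T x))
    (S : Set X) (hS : MeasurableSet S)
    (W : ℕ → X → ℝ)
    (hW0 : ∀ x, W 0 x = if x ∈ S then 0 else 1)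
    (hWin : ∀ k, ∀ x ∈ S, W (k + 1) x = ∫ y, W k y ∂(T x))
    (hWout : ∀ k, ∀ x, x ∉ S → W (k + 1) x = 1)
    (B : X → ℝ) (β : ℝ) (hβ : 0 ≤ β)
    (hBmeas : Measurable B)
    (hBint : ∀ x, Integrable B (T x))
    (hBnonneg : ∀ x, 0 ≤ B x)
    (hBunsafe : ∀ x, x ∉ S → 1 ≤ B x)
    (hdrift : ∀ x ∈ S, (∫ y, B y ∂(T x)) ≤ B x + β) :
    ∀ (k : ℕ) (x : X), W k x ≤ B x + k * β :=
  timeInvariant_barrier_induction_general T hT S W hW0 hWin hWout B β hβ hBint hBnonneg hBunsafe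
    hdrift
end
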